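/- arXiv:1102.5465 — 2 statements merged into one kernel-verified Lean document; each statement's English description precedes it below -/
import Mathlib

section
/- Let S be a finite index set, and for each v ∈ S let b_v, d_v, m_v be positive integers with gcd(b_v, d_v) = 1, m_v · d_v = r for a fixed positive integer r, and suppose ∑_{v ∈ S} b_v/d_v is an integer. Then ∑_{v ∈ S} (r − m_v) is even. -/
/-!
Multiplying `∑ b_v / d_v = n` by `r` gives `∑ m_v b_v = r n`. If `r` is odd, every `m_v` divides
`r` and is odd, so each `r - m_v` is even. If `r` is even, `r - m_v ≡ m_v ≡ m_v b_v (mod 2)`: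
when `m_v` is odd, `d_v` must be even, so `b_v` is odd by coprimality. Hence
`∑ (r - m_v) ≡ r n ≡ 0 (mod 2)`.
-/

theorem dvd_sum_mul_of_sum_div_eq_intCast {V : Type*} {S : Finset V} {r : ℕ} {b d m : V → ℕ}
    (hd : ∀ v ∈ S, d v ≠ 0) (hmd : ∀ v ∈ S, m v * d v = r) {n : ℤ}
    (hn : ∑ v ∈ S, (b v : ℚ) / d v = n) :
    r ∣ ∑ v ∈ S, m v * b v := by
  have hq : ∑ v ∈ S, (m v * b v : ℚ) = r * n := by
    rw [← hn, Finset.mul_sum]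
    refine Finset.sum_congr rfl fun v hv => ?_
    have hdv : (d v : ℚ) ≠ 0 := by exact_mod_cast hd v hv
    rw [← hmd v hv]
    push_cast
    field_simp
  rw [← Int.natCast_dvd_natCast]
  exact ⟨n, by exact_mod_cast hq⟩

theorem Nat.Coprime.odd_of_even_right {b d : ℕ} (hcop : b.Coprime d) (hd : Even d) : Odd b :=
  (hcop.coprime_dvd_right hd.two_dvd).odd_of_right

theorem sub_modEq_mul_of_coprime {r m d b : ℕ} (hr : Even r) (hmd : m * d = r) (hd : 0 < d)
    (hcop : b.Coprime d) : r - m ≡ m * b [MOD 2] := by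
  have hle : m ≤ r := hmd ▸ Nat.le_mul_of_pos_right m hd
  have hsub : r - m ≡ m [MOD 2] := by
    rw [Nat.even_iff] at hr
    unfold Nat.ModEq
    omega
  refine hsub.trans ?_
  rcases Nat.even_or_odd m with hm | hm
  · rw [Nat.ModEq, Nat.even_iff.1 hm, Nat.even_iff.1 (hm.mul_right b)]
  · have hd : Even d := (Nat.even_mul.1 (hmd ▸ hr)).resolve_left (Nat.not_even_iff_odd.2 hm)
    rw [Nat.ModEq, Nat.odd_iff.1 hm, Nat.odd_iff.1 (hm.mul (hcop.odd_of_even_right hd))]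

theorem even_sub_of_mul_eq {r m d : ℕ} (hr : Odd r) (hmd : m * d = r) : Even (r - m) :=
  Nat.Odd.sub_odd hr (Nat.odd_mul.1 (hmd ▸ hr)).1

theorem sum_r_sub_m_even_general {V : Type*} (S : Finset V) (r : ℕ)
    (b d m : V → ℕ)
    (hd : ∀ v ∈ S, 0 < d v)
    (hcop : ∀ v ∈ S, Nat.Coprime (b v) (d v))
    (hmd : ∀ v ∈ S, m v * d v = r)
    (hint : ∃ n : ℤ, (∑ v ∈ S, (b v : ℚ) / (d v)) = n) :
    Even (∑ v ∈ S, (r - m v)) := by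
  rcases Nat.even_or_odd r with hr | hr
  · obtain ⟨n, hn⟩ := hint
    have hdvd : r ∣ ∑ v ∈ S, m v * b v :=
      dvd_sum_mul_of_sum_div_eq_intCast (fun v hv => (hd v hv).ne') hmd hn
    have hmod : ∑ v ∈ S, (r - m v) ≡ ∑ v ∈ S, m v * b v [MOD 2] :=
      Nat.ModEq.sum fun v hv => sub_modEq_mul_of_coprime hr (hmd v hv) (hd v hv) (hcop v hv)
    exact Nat.even_iff.2 (hmod.trans (Nat.modEq_zero_iff_dvd.2 (hr.two_dvd.trans hdvd)))
  · exact Finset.even_sum _ fun v hv => even_sub_of_mul_eq hr (hmd v hv)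

/-- If for each `v` in a finite set `S`, `b v` and `d v` are coprime positive
integers with `m v * d v = r`, and `∑_{v ∈ S} b v / d v` is an integer, then
`∑_{v ∈ S} (r − m v)` is even. -/
theorem sum_r_sub_m_even {V : Type*} (S : Finset V) (r : ℕ) (hr : 0 < r)
    (b d m : V → ℕ)
    (hb : ∀ v ∈ S, 0 < b v) (hd : ∀ v ∈ S, 0 < d v) (hm : ∀ v ∈ S, 0 < m v)
    (hcop : ∀ v ∈ S, Nat.Coprime (b v) (d v))
    (hlt : ∀ v ∈ S, b v < d v)
    (hmd : ∀ v ∈ S, m v * d v = r)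
    (hint : ∃ n : ℤ, (∑ v ∈ S, (b v : ℚ) / (d v)) = n) :
    Even (∑ v ∈ S, (r - m v)) :=
  sum_r_sub_m_even_general S r b d m hd hcop hmd hint
end

section
/- For a prime p, a positive integer m, and ℓ ≥ 0, the number of subgroups of ℤ^m of index p^ℓ equals ∑_{(ℓ_1,…,ℓ_m), ℓ_i ≥ 0, ℓ_1+⋯+ℓ_m = ℓ} ∏_{i=1}^{m} p^{ℓ_i·(i−1)}. -/
/-!
Write `ℤ^(m+1) = ℤ × ℤ^m` and let `a_m(n)` be the number of subgroups of `ℤ^m` of index `n`.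
A subgroup `H` of finite index is determined by `K = H ∩ ℤ^m`, the positive generator `d` of its
projection to the first factor, and the class modulo `K` of any `v` with `(d, v) ∈ H`; every such
triple occurs, and `[ℤ^(m+1) : H] = d · [ℤ^m : K]` (the Hermite normal form, one column at a
time). Counting the `[ℤ^m : K]` choices of `v` gives `a_{m+1}(n) = ∑_{e ∣ n} a_m(e) · e`. For
`n = p^ℓ` this is the recursion of the sum over compositions: the new part `ℓ_1 = ℓ - j` has
weight `0`, and shifting the old weights up by one contributes the factor `p^j = e`.
-/

section Compositions

open Finset

theorem Finset.Nat.sum_antidiagonalTuple_succ {M : Type*} [AddCommMonoid M] (k n : ℕ)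
    (f : (Fin (k + 1) → ℕ) → M) :
    ∑ t ∈ Nat.antidiagonalTuple (k + 1) n, f t =
      ∑ ij ∈ antidiagonal n, ∑ t ∈ Nat.antidiagonalTuple k ij.2, f (Fin.cons ij.1 t) := by
  -- the list underlying `antidiagonalTuple (k + 1) n` is built by choosing the first entry
  change ((List.Nat.antidiagonalTuple (k + 1) n).map f).sum =
    ((List.Nat.antidiagonal n).map fun ij =>
      ((List.Nat.antidiagonalTuple k ij.2).map fun t => f (Fin.cons ij.1 t)).sum).sum
  simp [List.Nat.antidiagonalTuple, List.flatMap, List.map_flatten, Function.comp_def]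

theorem Fin.prod_pow_cons_mul_val {k : ℕ} (p a : ℕ) (t : Fin k → ℕ) :
    ∏ i : Fin (k + 1), p ^ ((Fin.cons a t : Fin (k + 1) → ℕ) i * i) =
      p ^ (∑ i, t i) * ∏ i, p ^ (t i * (i : ℕ)) := by
  rw [Fin.prod_univ_succ, ← prod_pow_eq_pow_sum, ← prod_mul_distrib]
  simp [mul_add, pow_add, mul_comm]

theorem Finset.Nat.sum_antidiagonalTuple_succ_prod_pow (p k n : ℕ) :
    ∑ t ∈ Nat.antidiagonalTuple (k + 1) n, ∏ i, p ^ (t i * (i : ℕ)) =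
      ∑ j ∈ range (n + 1), (∑ t ∈ Nat.antidiagonalTuple k j, ∏ i, p ^ (t i * (i : ℕ))) * p ^ j := by
  rw [Nat.sum_antidiagonalTuple_succ, ← Nat.sum_antidiagonal_swap,
    Nat.sum_antidiagonal_eq_sum_range_succ_mk]
  refine sum_congr rfl fun j _ => ?_
  rw [sum_mul]
  refine sum_congr rfl fun t ht => ?_
  rw [Fin.prod_pow_cons_mul_val, Nat.mem_antidiagonalTuple.1 ht, mul_comm]

end Compositions

theorem Nat.div_ne_zero_of_mem_divisors {n e : ℕ} (he : e ∈ n.divisors) : n / e ≠ 0 :=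
  (Nat.div_pos (Nat.divisor_le he) (Nat.pos_of_mem_divisors he)).ne'

section SubgroupIndex

open AddSubgroup

theorem AddSubgroup.index_eq_index_map_fst_mul_index_comap_inr {A B : Type*} [AddCommGroup A]
    [AddCommGroup B] (H : AddSubgroup (A × B)) :
    H.index = (H.map (AddMonoidHom.fst A B)).index * (H.comap (AddMonoidHom.inr A B)).index := by
  have hker : (AddMonoidHom.fst A B).ker = (⊤ : AddSubgroup B).map (AddMonoidHom.inr A B) := by
    ext x; simp [Prod.ext_iff, eq_comm, mem_prod]
  -- `[A × B : H] = [A × B : H ⊔ N] · [H ⊔ N : H]` with `N = 0 × B`, and `[H ⊔ N : H] = [N : H ⊓ N]`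
  rw [index_map, AddMonoidHom.range_eq_top.2 (Prod.fst_surjective (α := A) (β := B)), index_top,
    mul_one, hker, ← relIndex_mul_index (le_sup_left : H ≤ H ⊔ (⊤ : AddSubgroup B).map _),
    relIndex_sup_left, ← relIndex_comap, relIndex_top_right, mul_comm]

theorem Int.eq_zmultiples_index (S : AddSubgroup ℤ) : S = zmultiples (S.index : ℤ) := by
  obtain ⟨a, rfl⟩ := Int.subgroup_cyclic S
  rw [← zmultiples_eq_closure, Int.index_zmultiples, Int.zmultiples_natAbs]

theorem card_subgroups_index_of_subsingleton {G : Type*} [AddGroup G] [Subsingleton G] (n : ℕ) :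
    Nat.card {H : AddSubgroup G // H.index = n} = if n = 1 then 1 else 0 := by
  have h (H : AddSubgroup G) : H.index = 1 := AddSubgroup.index_eq_one.2 (Subsingleton.elim _ _)
  split_ifs with hn <;> simp [h, hn, eq_comm]

def AddEquiv.subgroupsOfIndexEquiv {A B : Type*} [AddGroup A] [AddGroup B] (ε : A ≃+ B) (n : ℕ) :
    {H : AddSubgroup A // H.index = n} ≃ {H : AddSubgroup B // H.index = n} :=
  ε.mapAddSubgroup.toEquiv.subtypeEquiv fun H => by simp

section Hermite

variable {G : Type*} [AddCommGroup G]

/-- The subgroup of `ℤ × G` generated by `0 × K` and `(d, v)`. -/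
def hermiteSubgroup (d : ℤ) (K : AddSubgroup G) (v : G) : AddSubgroup (ℤ × G) where
  carrier := {x | ∃ k : ℤ, x.1 = k * d ∧ x.2 - k • v ∈ K}
  zero_mem' := ⟨0, by simp⟩
  add_mem' := by
    rintro x y ⟨k, hk, hxk⟩ ⟨l, hl, hyl⟩
    refine ⟨k + l, by simp [hk, hl, add_mul], ?_⟩
    convert K.add_mem hxk hyl using 1
    simp only [Prod.snd_add, add_smul]; abel
  neg_mem' := by
    rintro x ⟨k, hk, hxk⟩
    refine ⟨-k, by simp [hk], ?_⟩
    convert K.neg_mem hxk using 1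
    simp only [Prod.snd_neg, neg_smul]; abel

variable {d : ℤ} {K : AddSubgroup G} {v : G}

@[simp]
theorem mem_hermiteSubgroup {x : ℤ × G} :
    x ∈ hermiteSubgroup d K v ↔ ∃ k : ℤ, x.1 = k * d ∧ x.2 - k • v ∈ K :=
  Iff.rfl

theorem mk_mem_hermiteSubgroup_iff (hd : d ≠ 0) {w : G} :
    (d, w) ∈ hermiteSubgroup d K v ↔ w - v ∈ K := by
  refine ⟨fun ⟨k, hk, hw⟩ => ?_, fun hw => ⟨1, by simp, by simpa using hw⟩⟩
  obtain rfl : k = 1 := by simpa [hd] using (mul_left_eq_self₀.1 hk.symm)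
  simpa using hw

theorem map_fst_hermiteSubgroup :
    (hermiteSubgroup d K v).map (AddMonoidHom.fst ℤ G) = zmultiples d := by
  ext z
  simp only [mem_map, AddMonoidHom.coe_fst, mem_zmultiples_iff, smul_eq_mul]
  constructor
  · rintro ⟨x, ⟨k, hk, -⟩, rfl⟩
    exact ⟨k, hk.symm⟩
  · rintro ⟨k, rfl⟩
    exact ⟨(k * d, k • v), ⟨k, rfl, by simp⟩, rfl⟩

theorem comap_inr_hermiteSubgroup (hd : d ≠ 0) :
    (hermiteSubgroup d K v).comap (AddMonoidHom.inr ℤ G) = K := by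
  ext g
  simp only [mem_comap, AddMonoidHom.inr_apply, mem_hermiteSubgroup]
  constructor
  · rintro ⟨k, hk, hg⟩
    obtain rfl : k = 0 := by simpa [hd] using hk.symm
    simpa using hg
  · exact fun hg => ⟨0, by simp, by simpa using hg⟩

theorem index_hermiteSubgroup (hd : d ≠ 0) :
    (hermiteSubgroup d K v).index = d.natAbs * K.index := by
  rw [index_eq_index_map_fst_mul_index_comap_inr, map_fst_hermiteSubgroup,
    comap_inr_hermiteSubgroup hd, Int.index_zmultiples]

theorem hermiteSubgroup_congr_right {v' : G} (h : v - v' ∈ K) :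
    hermiteSubgroup d K v = hermiteSubgroup d K v' := by
  ext x
  simp only [mem_hermiteSubgroup]
  refine exists_congr fun k => and_congr_right fun _ => ?_
  rw [← K.add_mem_cancel_right (K.zsmul_mem h k)]
  simp only [smul_sub, sub_add_sub_cancel]

theorem eq_hermiteSubgroup {H : AddSubgroup (ℤ × G)} (hv : (d, v) ∈ H)
    (hd : H.map (AddMonoidHom.fst ℤ G) = zmultiples d) :
    H = hermiteSubgroup d (H.comap (AddMonoidHom.inr ℤ G)) v := by
  ext x
  simp only [mem_hermiteSubgroup, mem_comap, AddMonoidHom.inr_apply]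
  constructor
  · intro hx
    obtain ⟨k, hk⟩ : x.1 ∈ zmultiples d := hd ▸ mem_map_of_mem _ hx
    refine ⟨k, by simpa [eq_comm] using hk, ?_⟩
    convert H.sub_mem hx (H.zsmul_mem hv k) using 1
    ext <;> simp [← hk]
  · rintro ⟨k, hk, hx⟩
    convert H.add_mem hx (H.zsmul_mem hv k) using 1
    ext <;> simp [hk]

def hermiteSubgroupQuot (d : ℤ) (K : AddSubgroup G) : G ⧸ K → AddSubgroup (ℤ × G) :=
  Quotient.lift (hermiteSubgroup d K) fun v v' h => hermiteSubgroup_congr_right <| by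
    simpa [neg_add_eq_sub] using K.neg_mem (QuotientAddGroup.leftRel_apply.1 h)

theorem index_hermiteSubgroupQuot (hd : d ≠ 0) (q : G ⧸ K) :
    (hermiteSubgroupQuot d K q).index = d.natAbs * K.index :=
  QuotientAddGroup.induction_on q fun _ => index_hermiteSubgroup hd

variable (G) in
def hermiteParam (n : ℕ) :
    (Σ e : n.divisors, Σ K : {K : AddSubgroup G // K.index = e}, G ⧸ K.1) →
      {H : AddSubgroup (ℤ × G) // H.index = n} :=
  fun ⟨e, K, q⟩ => ⟨hermiteSubgroupQuot (n / e : ℕ) K q, by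
    rw [index_hermiteSubgroupQuot (mod_cast Nat.div_ne_zero_of_mem_divisors e.2),
      Int.natAbs_natCast, K.2, Nat.div_mul_cancel (Nat.dvd_of_mem_divisors e.2)]⟩

theorem hermiteParam_injective (n : ℕ) : Function.Injective (hermiteParam G n) := by
  rintro ⟨e, K, q⟩ ⟨e', K', q'⟩ h
  induction q using QuotientAddGroup.induction_on with | H v =>
  induction q' using QuotientAddGroup.induction_on with | H v' =>
  have hd (c : n.divisors) : ((n / c : ℕ) : ℤ) ≠ 0 := mod_cast Nat.div_ne_zero_of_mem_divisors c.2
  replace h : hermiteSubgroup (n / e : ℕ) K.1 v = hermiteSubgroup (n / e' : ℕ) K'.1 v' :=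
    congrArg Subtype.val h
  have hK : K.1 = K'.1 := by
    rw [← comap_inr_hermiteSubgroup (hd e) (K := K.1) (v := v), h,
      comap_inr_hermiteSubgroup (hd e')]
  obtain rfl : e = e' := Subtype.ext (K.2.symm.trans (hK ▸ K'.2))
  obtain rfl : K = K' := Subtype.ext hK
  have hv : v' - v ∈ K.1 := by
    rw [← mk_mem_hermiteSubgroup_iff (hd e), h, mk_mem_hermiteSubgroup_iff (hd e), sub_self]
    exact K.1.zero_mem
  congr 2
  exact QuotientAddGroup.eq_iff_sub_mem.2 (by simpa using K.1.neg_mem hv)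

theorem hermiteParam_surjective {n : ℕ} (hn : n ≠ 0) :
    Function.Surjective (hermiteParam G n) := by
  rintro ⟨H, hH⟩
  set K := H.comap (AddMonoidHom.inr ℤ G)
  set D := (H.map (AddMonoidHom.fst ℤ G)).index
  have hDK : D * K.index = n := by rw [← hH, index_eq_index_map_fst_mul_index_comap_inr]
  have hK : K.index ≠ 0 := right_ne_zero_of_mul (hDK ▸ hn)
  have hmap : H.map (AddMonoidHom.fst ℤ G) = zmultiples (D : ℤ) := Int.eq_zmultiples_index _
  obtain ⟨x, hx, hxD⟩ := hmap ▸ mem_zmultiples (D : ℤ)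
  have hxH : ((D : ℤ), x.2) ∈ H := by rwa [← hxD]
  refine ⟨⟨⟨K.index, Nat.mem_divisors.2 ⟨Dvd.intro_left _ hDK, hn⟩⟩, ⟨K, rfl⟩, x.2⟩, ?_⟩
  have hnD : n / K.index = D := by rw [← hDK, Nat.mul_div_cancel _ (Nat.pos_of_ne_zero hK)]
  refine Subtype.ext ?_
  change hermiteSubgroup ((n / K.index : ℕ) : ℤ) K x.2 = H
  rw [hnD]
  exact (eq_hermiteSubgroup hxH hmap).symm

variable (G) in
noncomputable def hermiteEquiv {n : ℕ} (hn : n ≠ 0) :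
    (Σ e : n.divisors, Σ K : {K : AddSubgroup G // K.index = e}, G ⧸ K.1) ≃
      {H : AddSubgroup (ℤ × G) // H.index = n} :=
  Equiv.ofBijective _ ⟨hermiteParam_injective n, hermiteParam_surjective hn⟩

theorem finite_subgroups_index_int_prod {n : ℕ} (hn : n ≠ 0)
    (hfin : ∀ e ≠ 0, Finite {K : AddSubgroup G // K.index = e}) :
    Finite {H : AddSubgroup (ℤ × G) // H.index = n} := by
  have (e : n.divisors) := hfin e (Nat.pos_of_mem_divisors e.2).ne'
  have (e : n.divisors) (K : {K : AddSubgroup G // K.index = e}) : Finite (G ⧸ K.1) :=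
    Nat.finite_of_card_ne_zero (K.2.trans_ne (Nat.pos_of_mem_divisors e.2).ne')
  exact Finite.of_equiv _ (hermiteEquiv G hn)

theorem card_subgroups_index_int_prod {n : ℕ} (hn : n ≠ 0)
    (hfin : ∀ e ≠ 0, Finite {K : AddSubgroup G // K.index = e}) :
    Nat.card {H : AddSubgroup (ℤ × G) // H.index = n} =
      ∑ e ∈ n.divisors, Nat.card {K : AddSubgroup G // K.index = e} * e := by
  have (e : n.divisors) := hfin e (Nat.pos_of_mem_divisors e.2).ne'
  have (e : n.divisors) (K : {K : AddSubgroup G // K.index = e}) : Finite (G ⧸ K.1) :=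
    Nat.finite_of_card_ne_zero (K.2.trans_ne (Nat.pos_of_mem_divisors e.2).ne')
  rw [← Nat.card_congr (hermiteEquiv G hn), Nat.card_sigma, ← Finset.sum_coe_sort n.divisors]
  refine Finset.sum_congr rfl fun e _ => ?_
  have := Fintype.ofFinite {K : AddSubgroup G // K.index = e}
  rw [Nat.card_sigma, Nat.card_eq_fintype_card, ← smul_eq_mul, ← Finset.card_univ,
    ← Finset.sum_const]
  exact Finset.sum_congr rfl fun K _ => K.2

end Hermite

end SubgroupIndex

theorem finite_subgroups_index_pi_int (m : ℕ) {n : ℕ} (hn : n ≠ 0) :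
    Finite {H : AddSubgroup (Fin m → ℤ) // H.index = n} := by
  induction m generalizing n with
  | zero => infer_instance
  | succ m ih =>
    have := finite_subgroups_index_int_prod hn fun _ => ih
    exact .of_equiv _ ((Fin.consLinearEquiv ℤ fun _ => ℤ).toAddEquiv.subgroupsOfIndexEquiv n)

theorem card_subgroups_index_prime_pow_general (p : ℕ) (hp : p.Prime) (m : ℕ) (ℓ : ℕ) :
    Nat.card {H : AddSubgroup (Fin m → ℤ) // H.index = p ^ ℓ} =
      ∑ t ∈ Finset.Nat.antidiagonalTuple m ℓ, ∏ i : Fin m, p ^ (t i * (i : ℕ)) := by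
  induction m generalizing ℓ with
  | zero =>
    rw [card_subgroups_index_of_subsingleton]
    cases ℓ <;> simp [hp.ne_one]
  | succ m ih =>
    rw [← Nat.card_congr ((Fin.consLinearEquiv ℤ fun _ => ℤ).toAddEquiv.subgroupsOfIndexEquiv _),
      card_subgroups_index_int_prod (pow_ne_zero ℓ hp.ne_zero)
        fun _ => finite_subgroups_index_pi_int m,
      Nat.sum_divisors_prime_pow hp, Finset.Nat.sum_antidiagonalTuple_succ_prod_pow]
    simp only [ih]

/-- The number of subgroups of `ℤ^m` of index `p^ℓ` equals
`∑_{ℓ_1+⋯+ℓ_m = ℓ, ℓ_i ≥ 0} ∏_{i=1}^{m} p^{ℓ_i (i−1)}`. -/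
theorem card_subgroups_index_prime_pow (p : ℕ) (hp : p.Prime) (m : ℕ)
    (hm : 0 < m) (ℓ : ℕ) :
    Nat.card {H : AddSubgroup (Fin m → ℤ) // H.index = p ^ ℓ} =
      ∑ t ∈ Finset.Nat.antidiagonalTuple m ℓ, ∏ i : Fin m, p ^ (t i * (i : ℕ)) :=
  card_subgroups_index_prime_pow_general p hp m ℓ
end
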